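/- The zeros of V_m are the eigenvalues of the truncated N-block Jacobi matrix, with the same multiplicities: let {A_k}, {B_k}, {C_k} be N×N complex matrices with every A_k invertible, and let {V_m}_{m ≥ -1} be the N×N matrix polynomials determined by V_{-1} = 0, V_0 = I and z V_m(z) = A_m V_{m+1}(z) + B_m V_m(z) + C_m V_{m-1}(z) for all m ≥ 0. Let J_m be the mN×mN block tridiagonal matrix with diagonal blocks B_0, B_1, …, B_{m-1}, superdiagonal blocks A_0, A_1, …, A_{m-2}, and subdiagonal blocks C_1, C_2, …, C_{m-1}. Then, as polynomials in t, det(t·I_{mN} − J_m) = det(A_0)·det(A_1)⋯det(A_{m-1})·det(V_m(t)); in particular the roots of det(V_m) are exactly the eigenvalues of J_m with matching multiplicities. -/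

import Mathlib

/-!
Write `T_m = t I - J_m` and stack `V_0, …, V_{m-1}` into a block column `v`. The recurrence says
precisely that `T_{k+1} v = (0, …, 0, A_k V_{k+1})`. Hence multiplying `T_{k+1}` on the right by the
block upper-triangular matrix `[[I, v'], [0, V_k]]`, where `v'` consists of the first `k` blocks
of `v`, gives a block lower-triangular matrix with diagonal blocks `T_k` and `A_k V_{k+1}`, so
`det T_{k+1} · det V_k = det T_k · det A_k · det V_{k+1}`. Induction from `V_0 = I` finishes the
proof: `det V_k` may be cancelled because `det T_k`, a multiple of it, is monic and hence nonzero.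
-/

open Polynomial Matrix Finset

noncomputable section

/-- `N × N` matrices with polynomial entries, viewed as matrix polynomials. -/
abbrev MatPoly (N : ℕ) := Matrix (Fin N) (Fin N) (Polynomial ℂ)

/-- Evaluation of a matrix polynomial at a complex number (entrywise evaluation). -/
def evalM {N : ℕ} (Q : MatPoly N) (z : ℂ) : Matrix (Fin N) (Fin N) ℂ :=
  Q.map (Polynomial.eval z)

namespace Matrix

theorem det_mul_det_eq_of_mul_fromRows {R ι κ : Type*} [CommRing R] [Fintype ι] [DecidableEq ι]
    [Fintype κ] [DecidableEq κ] {M : Matrix (ι ⊕ κ) (ι ⊕ κ) R} {W : Matrix ι κ R}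
    {X D : Matrix κ κ R} (h : M * fromRows W X = fromRows 0 D) :
    M.det * X.det = M.toBlocks₁₁.det * D.det := by
  rw [← fromBlocks_toBlocks M, fromBlocks_mul_fromRows] at h
  obtain ⟨h₁, h₂⟩ := fromRows_inj h
  calc M.det * X.det = (M * fromBlocks 1 W 0 X).det := by
        rw [det_mul, det_fromBlocks_zero₂₁, det_one, one_mul]
    _ = (fromBlocks M.toBlocks₁₁ 0 M.toBlocks₂₁ D).det := by
        conv_lhs => rw [← fromBlocks_toBlocks M]
        rw [fromBlocks_multiply, h₁, h₂]
        simp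
    _ = M.toBlocks₁₁.det * D.det := det_fromBlocks_zero₁₂ _ _ _

theorem charmatrix_toBlocks₁₁ {R ι κ : Type*} [CommRing R] [Fintype ι] [DecidableEq ι]
    [Fintype κ] [DecidableEq κ]
    (M : Matrix (ι ⊕ κ) (ι ⊕ κ) R) : (charmatrix M).toBlocks₁₁ = charmatrix M.toBlocks₁₁ := by
  conv_lhs => rw [← fromBlocks_toBlocks M]
  rw [charmatrix_fromBlocks, toBlocks_fromBlocks₁₁]

variable {S : Type*} {n n' : Type*}

def blockMatrix (b : ℕ → ℕ → Matrix n n S) (m : ℕ) : Matrix (Fin m × n) (Fin m × n) S :=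
  of fun jp lq => b jp.1 lq.1 jp.2 lq.2

def blockColumn (V : ℕ → Matrix n n' S) (m : ℕ) : Matrix (Fin m × n) n' S :=
  of fun jp q => V jp.1 jp.2 q

theorem blockColumn_congr {V W : ℕ → Matrix n n' S} {m : ℕ} (h : ∀ j < m, V j = W j) :
    blockColumn V m = blockColumn W m := by
  ext ⟨j, p⟩ q
  simp [blockColumn, h j j.isLt]

theorem blockMatrix_map {T : Type*} (b : ℕ → ℕ → Matrix n n S) (m : ℕ) (f : S → T) :
    (blockMatrix b m).map f = blockMatrix (fun j l => (b j l).map f) m :=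
  rfl

theorem blockMatrix_mul_blockColumn [Fintype n] [NonUnitalNonAssocSemiring S]
    (b : ℕ → ℕ → Matrix n n S) (V : ℕ → Matrix n n' S) (m : ℕ) :
    blockMatrix b m * blockColumn V m =
      blockColumn (fun j => ∑ l ∈ range m, b j l * V l) m := by
  ext ⟨j, p⟩ q
  simp only [blockMatrix, blockColumn, mul_apply, of_apply, Fintype.sum_prod_type, Matrix.sum_apply]
  exact Fin.sum_univ_eq_sum_range (fun l => ∑ r, b j l p r * V l r q) m

def lastBlockEquiv (k : ℕ) (n : Type*) : (Fin k × n) ⊕ n ≃ Fin (k + 1) × n :=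
  ((Equiv.sumCongr (Equiv.refl _) (Equiv.uniqueProd n (Fin 1))).symm.trans
    (Equiv.sumProdDistrib _ _ _).symm).trans (finSumFinEquiv.prodCongr (Equiv.refl n))

theorem blockColumn_submatrix_lastBlockEquiv (V : ℕ → Matrix n n' S) (k : ℕ) :
    (blockColumn V (k + 1)).submatrix (lastBlockEquiv k n) id =
      fromRows (blockColumn V k) (V k) := by
  ext (⟨j, p⟩ | p) q <;> simp [blockColumn, lastBlockEquiv]

theorem toBlocks₁₁_blockMatrix_submatrix_lastBlockEquiv (b : ℕ → ℕ → Matrix n n S) (k : ℕ) :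
    ((blockMatrix b (k + 1)).submatrix (lastBlockEquiv k n) (lastBlockEquiv k n)).toBlocks₁₁ =
      blockMatrix b k := by
  ext ⟨j, p⟩ ⟨l, q⟩
  simp [blockMatrix, lastBlockEquiv, toBlocks₁₁]

theorem charmatrix_blockMatrix_mul_blockColumn {R : Type*} [CommRing R] [Fintype n] [DecidableEq n]
    (b : ℕ → ℕ → Matrix n n R) (V : ℕ → Matrix n n' R[X]) (m : ℕ) :
    charmatrix (blockMatrix b m) * blockColumn V m =
      blockColumn (fun j => (X : R[X]) • V j - ∑ l ∈ range m, (b j l).map Polynomial.C * V l)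
        m := by
  rw [charmatrix, Matrix.sub_mul, scalar_apply, ← smul_eq_diagonal_mul, RingHom.mapMatrix_apply,
    blockMatrix_map, blockMatrix_mul_blockColumn]
  ext ⟨j, p⟩ q
  simp [blockColumn]

section Jacobi

variable (A B C : ℕ → Matrix n n S)

def jacobiBlock [Zero S] (j l : ℕ) : Matrix n n S :=
  if j = l then B j else if l = j + 1 then A j else if j = l + 1 then C j else 0

theorem jacobiBlock_map [Zero S] {T : Type*} [Zero T] (f : S → T) (hf : f 0 = 0) (j l : ℕ) :
    (jacobiBlock A B C j l).map f =
      jacobiBlock (fun i => (A i).map f) (fun i => (B i).map f) (fun i => (C i).map f) j l := by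
  unfold jacobiBlock
  split_ifs <;> simp [hf]

variable [NonUnitalNonAssocSemiring S] [Fintype n]

theorem sum_range_jacobiBlock_mul_of_le (V : ℕ → Matrix n n' S) {j m : ℕ} (h : j + 2 ≤ m) :
    ∑ l ∈ range m, jacobiBlock A B C j l * V l =
      ∑ l ∈ range (j + 2), jacobiBlock A B C j l * V l := by
  refine (sum_subset (range_subset_range.2 h) fun l _ hl => ?_).symm
  have : j + 2 ≤ l := by simpa using hl
  simp [jacobiBlock, show j ≠ l by omega, show l ≠ j + 1 by omega, show j ≠ l + 1 by omega]

theorem sum_range_two_jacobiBlock_zero_mul (V : ℕ → Matrix n n' S) :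
    ∑ l ∈ range 2, jacobiBlock A B C 0 l * V l = A 0 * V 1 + B 0 * V 0 := by
  simp [sum_range_succ, jacobiBlock, add_comm]

theorem sum_range_jacobiBlock_succ_mul (V : ℕ → Matrix n n' S) (i : ℕ) :
    ∑ l ∈ range (i + 3), jacobiBlock A B C (i + 1) l * V l =
      A (i + 1) * V (i + 2) + B (i + 1) * V (i + 1) + C (i + 1) * V i := by
  have hlow : ∑ l ∈ range i, jacobiBlock A B C (i + 1) l * V l = 0 :=
    sum_eq_zero fun l hl => by
      have : l < i := mem_range.1 hl
      simp [jacobiBlock, show i + 1 ≠ l by omega, show l ≠ i + 2 by omega,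
        show i ≠ l by omega]
  rw [sum_range_succ, sum_range_succ, sum_range_succ, hlow]
  simp [jacobiBlock, show i ≠ i + 1 + 1 by omega]
  abel

end Jacobi

section Charpoly

variable {R : Type*} [CommRing R] [Fintype n] [DecidableEq n] {A B C : ℕ → Matrix n n R}
  {V : ℕ → Matrix n n R[X]}

/-- `X • V = J V` for the infinite block Jacobi matrix `J`, whose row `j` vanishes beyond
column `j + 1`. -/
def IsJacobiEigenvector (A B C : ℕ → Matrix n n R) (V : ℕ → Matrix n n R[X]) : Prop :=
  ∀ j, (X : R[X]) • V j = ∑ l ∈ range (j + 2), (jacobiBlock A B C j l).map Polynomial.C * V l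

theorem charmatrix_blockMatrix_jacobiBlock_mul_blockColumn (hV : IsJacobiEigenvector A B C V)
    (k : ℕ) :
    charmatrix (blockMatrix (jacobiBlock A B C) (k + 1)) * blockColumn V (k + 1) =
      blockColumn (fun j => if j = k then (A k).map Polynomial.C * V (k + 1) else 0) (k + 1) := by
  rw [charmatrix_blockMatrix_mul_blockColumn]
  refine blockColumn_congr fun j hj => ?_
  rw [hV j]
  simp only [jacobiBlock_map A B C _ (map_zero Polynomial.C)]
  rcases (Nat.lt_succ_iff.1 hj).lt_or_eq with hjk | rfl
  · rw [sum_range_jacobiBlock_mul_of_le _ _ _ V (m := k + 1) (by omega), sub_self, if_neg hjk.ne]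
  · rw [sum_range_succ, add_sub_cancel_left, if_pos rfl]
    simp [jacobiBlock]

theorem charpoly_blockMatrix_jacobiBlock_succ_mul_det (hV : IsJacobiEigenvector A B C V) (k : ℕ) :
    (blockMatrix (jacobiBlock A B C) (k + 1)).charpoly * (V k).det =
      (blockMatrix (jacobiBlock A B C) k).charpoly *
        (Polynomial.C (A k).det * (V (k + 1)).det) := by
  set e := lastBlockEquiv k n
  set J := blockMatrix (jacobiBlock A B C) (k + 1)
  have hchar : charmatrix (J.submatrix e e) = (charmatrix J).submatrix e e := by
    simpa using charmatrix_reindex J e.symm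
  have hcol : charmatrix (J.submatrix e e) * fromRows (blockColumn V k) (V k) =
      fromRows 0 ((A k).map Polynomial.C * V (k + 1)) := by
    rw [hchar, ← blockColumn_submatrix_lastBlockEquiv, submatrix_mul_equiv,
      charmatrix_blockMatrix_jacobiBlock_mul_blockColumn hV, blockColumn_submatrix_lastBlockEquiv,
      if_pos rfl, blockColumn_congr fun j hj => if_neg hj.ne]
    rfl
  have hdet := det_mul_det_eq_of_mul_fromRows hcol
  rwa [charmatrix_toBlocks₁₁, toBlocks₁₁_blockMatrix_submatrix_lastBlockEquiv, hchar,
    det_submatrix_equiv_self, det_mul, ← RingHom.mapMatrix_apply, ← RingHom.map_det] at hdet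

theorem charpoly_blockMatrix_jacobiBlock [IsDomain R] (hV₀ : V 0 = 1)
    (hV : IsJacobiEigenvector A B C V) (m : ℕ) :
    (blockMatrix (jacobiBlock A B C) m).charpoly =
      Polynomial.C (∏ k ∈ range m, (A k).det) * (V m).det := by
  induction m with
  | zero => simp [charpoly_isEmpty, hV₀]
  | succ k ih =>
    have hVk : (V k).det ≠ 0 := right_ne_zero_of_mul (ih ▸ (charpoly_monic _).ne_zero)
    refine mul_right_cancel₀ hVk ?_
    rw [charpoly_blockMatrix_jacobiBlock_succ_mul_det hV, ih, prod_range_succ, map_mul]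
    ring

end Charpoly

end Matrix

section evalM

variable {N : ℕ}

theorem eq_of_forall_evalM_eq {P Q : MatPoly N} (h : ∀ z, evalM P z = evalM Q z) : P = Q :=
  Matrix.ext fun p q => Polynomial.funext fun z => congr_fun₂ (h z) p q

@[simp]
theorem evalM_add (P Q : MatPoly N) (z : ℂ) : evalM (P + Q) z = evalM P z + evalM Q z :=
  (evalRingHom z).mapMatrix.map_add P Q

@[simp]
theorem evalM_mul (P Q : MatPoly N) (z : ℂ) : evalM (P * Q) z = evalM P z * evalM Q z :=
  (evalRingHom z).mapMatrix.map_mul P Q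

@[simp]
theorem evalM_X_smul (P : MatPoly N) (z : ℂ) : evalM ((X : ℂ[X]) • P) z = z • evalM P z := by
  ext; simp [evalM]

@[simp]
theorem evalM_map_C (M : Matrix (Fin N) (Fin N) ℂ) (z : ℂ) :
    evalM (M.map Polynomial.C) z = M := by
  ext; simp [evalM]

end evalM

theorem charpoly_block_jacobi_eq_det_matrix_poly_general
    (N : ℕ)
    (A B C : ℕ → Matrix (Fin N) (Fin N) ℂ)
    (V : ℕ → MatPoly N)
    (hV0I : V 0 = 1)
    (hrec0 : ∀ z : ℂ, z • evalM (V 0) z = A 0 * evalM (V 1) z + B 0 * evalM (V 0) z)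
    (hrec : ∀ (m : ℕ) (z : ℂ), z • evalM (V (m + 1)) z =
      A (m + 1) * evalM (V (m + 2)) z + B (m + 1) * evalM (V (m + 1)) z +
        C (m + 1) * evalM (V m) z)
    (m : ℕ)
    (J : Matrix (Fin m × Fin N) (Fin m × Fin N) ℂ)
    (hJ : J = fun pq rs =>
      if pq.1 = rs.1 then B pq.1 pq.2 rs.2
      else if (rs.1 : ℕ) = (pq.1 : ℕ) + 1 then A pq.1 pq.2 rs.2
      else if (pq.1 : ℕ) = (rs.1 : ℕ) + 1 then C pq.1 pq.2 rs.2
      else 0) :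
    Matrix.charpoly J =
      Polynomial.C (∏ k ∈ Finset.range m, (A k).det) * Matrix.det (V m) := by
  have hV : IsJacobiEigenvector A B C V := by
    rintro (_ | j) <;> simp only [jacobiBlock_map A B C _ (map_zero Polynomial.C)]
    · rw [sum_range_two_jacobiBlock_zero_mul]
      exact eq_of_forall_evalM_eq fun z => by simpa using hrec0 z
    · rw [sum_range_jacobiBlock_succ_mul]
      exact eq_of_forall_evalM_eq fun z => by simpa using hrec j z
  have hJm : J = blockMatrix (jacobiBlock A B C) m := by
    subst hJ
    ext ⟨j, p⟩ ⟨l, q⟩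
    simp only [blockMatrix, jacobiBlock, of_apply, Fin.val_inj]
    split_ifs <;> rfl
  rw [hJm, charpoly_blockMatrix_jacobiBlock hV0I hV]

/-- **The zeros of `V_m` are the eigenvalues of the truncated block Jacobi matrix,
with matching multiplicities**: `det(t I_{mN} - J_m) = det A₀ ⋯ det A_{m-1} · det V_m(t)`
as polynomials in `t`. -/
theorem charpoly_block_jacobi_eq_det_matrix_poly
    (N : ℕ) (hN : 1 ≤ N)
    (A B C : ℕ → Matrix (Fin N) (Fin N) ℂ)
    (hA : ∀ k, IsUnit (A k))
    (V : ℕ → MatPoly N)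
    (hV0I : V 0 = 1)
    (hrec0 : ∀ z : ℂ, z • evalM (V 0) z = A 0 * evalM (V 1) z + B 0 * evalM (V 0) z)
    (hrec : ∀ (m : ℕ) (z : ℂ), z • evalM (V (m + 1)) z =
      A (m + 1) * evalM (V (m + 2)) z + B (m + 1) * evalM (V (m + 1)) z +
        C (m + 1) * evalM (V m) z)
    (m : ℕ) (hm : 1 ≤ m)
    (J : Matrix (Fin m × Fin N) (Fin m × Fin N) ℂ)
    (hJ : J = fun pq rs =>
      if pq.1 = rs.1 then B pq.1 pq.2 rs.2
      else if (rs.1 : ℕ) = (pq.1 : ℕ) + 1 then A pq.1 pq.2 rs.2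
      else if (pq.1 : ℕ) = (rs.1 : ℕ) + 1 then C pq.1 pq.2 rs.2
      else 0) :
    Matrix.charpoly J =
      Polynomial.C (∏ k ∈ Finset.range m, (A k).det) * Matrix.det (V m) :=
  charpoly_block_jacobi_eq_det_matrix_poly_general N A B C V hV0I hrec0 hrec m J hJ

end
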